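/- For a Gaussian random variable $X \sim \mathcal{N}(\alpha, \eta)$ with $\eta > 0$ and threshold $f^*$ with $\beta = (f^* - \alpha)/\sqrt{\eta}$, the truncated-Gaussian entropy $\log(\sqrt{2\pi e \eta}\,\Phi(\beta)) - \beta \varphi(\beta)/(2\Phi(\beta))$ is strictly less than the unconditional entropy $\tfrac{1}{2}\log(2\pi e \eta)$; equivalently, $\log \Phi(\beta) - \beta\varphi(\beta)/(2\Phi(\beta)) < 0$ for all $\beta \in \mathbb{R}$. -/

import Mathlib

open MeasureTheory Real

/-- Standard normal pdf. -/
noncomputable def stdNormalPdf (t : ℝ) : ℝ :=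
  Real.exp (-t ^ 2 / 2) / Real.sqrt (2 * Real.pi)

/-- Standard normal cdf. -/
noncomputable def stdNormalCdf (x : ℝ) : ℝ := ∫ t in Set.Iic x, stdNormalPdf t

open Set Filter

lemma sqrt2pi_pos : 0 < Real.sqrt (2 * Real.pi) :=
  Real.sqrt_pos.mpr (by positivity)

lemma pdf_pos (t : ℝ) : 0 < stdNormalPdf t :=
  div_pos (Real.exp_pos _) sqrt2pi_pos

lemma pdf_eq (t : ℝ) : stdNormalPdf t = Real.exp (-(1/2) * t ^ 2) / Real.sqrt (2 * Real.pi) := by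
  unfold stdNormalPdf; ring_nf

lemma pdf_integrable : Integrable stdNormalPdf := by
  have h := (integrable_exp_neg_mul_sq (by norm_num : (0:ℝ) < 1/2)).div_const (Real.sqrt (2 * Real.pi))
  exact h.congr (by filter_upwards with t using (pdf_eq t).symm)

lemma pdf_continuous : Continuous stdNormalPdf := by
  unfold stdNormalPdf
  exact (Real.continuous_exp.comp (by continuity)).div_const _

lemma integral_pdf : ∫ t, stdNormalPdf t = 1 := by
  simp_rw [pdf_eq, integral_div, integral_gaussian]
  rw [div_eq_one_iff_eq (by positivity)]
  rw [show π / (1/2) = 2 * π by ring]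

lemma cdf_pos (x : ℝ) : 0 < stdNormalCdf x := by
  unfold stdNormalCdf
  rw [setIntegral_pos_iff_support_of_nonneg_ae
    (Filter.Eventually.of_forall fun t => (pdf_pos t).le) pdf_integrable.integrableOn]
  have : Function.support stdNormalPdf = Set.univ := by
    ext t; simp [Function.mem_support, (pdf_pos t).ne']
  rw [this, Set.univ_inter]
  simp [Real.volume_Iic]

lemma cdf_add (x : ℝ) : stdNormalCdf x + ∫ t in Set.Ioi x, stdNormalPdf t = 1 := by
  unfold stdNormalCdf
  rw [← integral_pdf, ← setIntegral_union (Set.Iic_disjoint_Ioi le_rfl) measurableSet_Ioi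
    pdf_integrable.integrableOn pdf_integrable.integrableOn, Set.Iic_union_Ioi,
    setIntegral_univ]

lemma cdf_lt_one (x : ℝ) : stdNormalCdf x < 1 := by
  have h : 0 < ∫ t in Set.Ioi x, stdNormalPdf t := by
    rw [setIntegral_pos_iff_support_of_nonneg_ae
      (Filter.Eventually.of_forall fun t => (pdf_pos t).le) pdf_integrable.integrableOn]
    have : Function.support stdNormalPdf = Set.univ := by
      ext t; simp [Function.mem_support, (pdf_pos t).ne']
    rw [this, Set.univ_inter]
    simp [Real.volume_Ioi]
  linarith [cdf_add x]

lemma pdf_even (t : ℝ) : stdNormalPdf (-t) = stdNormalPdf t := by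
  unfold stdNormalPdf; rw [neg_pow]; norm_num

lemma cdf_zero : stdNormalCdf 0 = 1/2 := by
  have hsym : stdNormalCdf 0 = ∫ t in Set.Ioi (0:ℝ), stdNormalPdf t := by
    unfold stdNormalCdf
    calc (∫ t in Set.Iic (0:ℝ), stdNormalPdf t)
        = ∫ t in Set.Iic (0:ℝ), stdNormalPdf (-t) := by
          refine setIntegral_congr_fun measurableSet_Iic fun t _ => (pdf_even t).symm
      _ = ∫ t in Set.Ioi (-(0:ℝ)), stdNormalPdf t := integral_comp_neg_Iic 0 stdNormalPdf
      _ = ∫ t in Set.Ioi (0:ℝ), stdNormalPdf t := by rw [neg_zero]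
  have := cdf_add 0
  rw [hsym] at this; linarith

lemma shift_integral (x : ℝ) :
    (∫ s in Set.Iic x, stdNormalPdf (s - x)) = ∫ s in Set.Iic (0:ℝ), stdNormalPdf s := by
  have h1 : (∫ s in Set.Iic x, stdNormalPdf (s - x))
      = ∫ s, Set.indicator (Set.Iic (0:ℝ)) stdNormalPdf (s - x) := by
    rw [← integral_indicator measurableSet_Iic]
    congr 1; ext s
    by_cases hs : s ∈ Set.Iic x
    · have hs0 : s - x ∈ Set.Iic (0:ℝ) := by simpa [Set.mem_Iic] using sub_nonpos.mpr (Set.mem_Iic.mp hs)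
      rw [Set.indicator_of_mem hs, Set.indicator_of_mem hs0]
    · have hs0 : s - x ∉ Set.Iic (0:ℝ) := by
        simp only [Set.mem_Iic, not_le] at hs ⊢; linarith
      rw [Set.indicator_of_notMem hs, Set.indicator_of_notMem hs0]
  rw [h1, integral_sub_right_eq_self _ x, integral_indicator measurableSet_Iic]

lemma chernoff {x : ℝ} (hx : x ≤ 0) : stdNormalCdf x ≤ Real.exp (-x ^ 2 / 2) / 2 := by
  have key : ∀ s ∈ Set.Iic x,
      stdNormalPdf s ≤ Real.exp (-x ^ 2 / 2) * stdNormalPdf (s - x) := by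
    intro s hs
    have hs' : s ≤ x := hs
    unfold stdNormalPdf
    rw [mul_div_assoc', div_le_div_iff_of_pos_right sqrt2pi_pos, ← Real.exp_add]
    apply Real.exp_le_exp.mpr
    nlinarith [sq_nonneg (s - x)]
  have hmono : stdNormalCdf x ≤ ∫ s in Set.Iic x, Real.exp (-x ^ 2 / 2) * stdNormalPdf (s - x) := by
    refine setIntegral_mono_on pdf_integrable.integrableOn ?_ measurableSet_Iic key
    have : Integrable (fun s => stdNormalPdf (s - x)) := by
      have := pdf_integrable
      exact this.comp_sub_right x
    exact (this.const_mul _).integrableOn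
  calc stdNormalCdf x ≤ _ := hmono
    _ = Real.exp (-x ^ 2 / 2) * ∫ s in Set.Iic x, stdNormalPdf (s - x) := by
        rw [integral_const_mul]
    _ = Real.exp (-x ^ 2 / 2) / 2 := by
        rw [shift_integral x]
        have : (∫ s in Set.Iic (0:ℝ), stdNormalPdf s) = stdNormalCdf 0 := rfl
        rw [this, cdf_zero]; ring

lemma pdf_hasDeriv (t : ℝ) : HasDerivAt stdNormalPdf (-t * stdNormalPdf t) t := by
  have h1 : HasDerivAt (fun t : ℝ => -t ^ 2 / 2) (-t) t := by
    have := ((hasDerivAt_pow 2 t).neg).div_const 2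
    exact this.congr_deriv (by norm_num; ring)
  have h2 := (h1.exp).div_const (Real.sqrt (2 * Real.pi))
  have h3 : HasDerivAt stdNormalPdf (Real.exp (-t ^ 2 / 2) * -t / Real.sqrt (2 * Real.pi)) t := h2
  exact h3.congr_deriv (by unfold stdNormalPdf; ring)

lemma pdf_tendsto_atBot : Tendsto stdNormalPdf atBot (nhds 0) := by
  have hsq : Tendsto (fun x : ℝ => x ^ 2) atBot atTop := by
    have := (tendsto_pow_atTop (α := ℝ) (n := 2) (by norm_num)).comp tendsto_neg_atBot_atTop
    exact this.congr (fun x => by simp [Function.comp])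
  have hexp : Tendsto (fun x : ℝ => -x ^ 2 / 2) atBot atBot := by
    have h : Tendsto (fun x : ℝ => (-(1:ℝ)/2) * x ^ 2) atBot atBot :=
      (tendsto_const_mul_atBot_of_neg (show (-(1:ℝ)/2) < 0 by norm_num)).mpr hsq
    exact h.congr (fun x => by ring)
  have := Real.tendsto_exp_atBot.comp hexp
  have h2 := this.div_const (Real.sqrt (2 * Real.pi))
  rw [zero_div] at h2
  exact h2.congr (fun x => by simp [Function.comp, stdNormalPdf])

noncomputable def millsG (x : ℝ) : ℝ := -x * stdNormalPdf x / (x ^ 2 + 1)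

noncomputable def millsG' (x : ℝ) : ℝ :=
  stdNormalPdf x * (x ^ 4 + 2 * x ^ 2 - 1) / (x ^ 2 + 1) ^ 2

lemma millsG_hasDeriv (x : ℝ) : HasDerivAt millsG (millsG' x) x := by
  have hden : (x ^ 2 + 1) ≠ 0 := by positivity
  have h1 : HasDerivAt (fun x : ℝ => -x * stdNormalPdf x)
      (-1 * stdNormalPdf x + -x * (-x * stdNormalPdf x)) x := by
    exact (((hasDerivAt_id x).neg).mul (pdf_hasDeriv x)).congr_deriv (by simp)
  have h2 : HasDerivAt (fun x : ℝ => x ^ 2 + 1) (2 * x) x := by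
    simpa using (hasDerivAt_pow 2 x).add_const 1
  have := h1.div h2 hden
  refine this.congr_deriv ?_
  unfold millsG'
  field_simp
  ring

lemma millsG_tendsto : Tendsto millsG atBot (nhds 0) := by
  apply squeeze_zero_norm _ pdf_tendsto_atBot
  intro x
  have hp := pdf_pos x
  have hden : (0:ℝ) < x ^ 2 + 1 := by positivity
  rw [Real.norm_eq_abs, millsG, abs_div, abs_of_pos hden, abs_mul, abs_neg]
  rw [abs_of_pos hp, div_le_iff₀ hden]
  nlinarith [abs_nonneg x, sq_abs x, sq_nonneg (|x| - 1)]

lemma millsG'_le (x : ℝ) : millsG' x ≤ stdNormalPdf x := by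
  have hp := pdf_pos x
  have hden : (0:ℝ) < (x ^ 2 + 1) ^ 2 := by positivity
  rw [millsG', div_le_iff₀ hden]
  nlinarith [sq_nonneg x]

lemma millsG'_abs_le (x : ℝ) : ‖millsG' x‖ ≤ ‖stdNormalPdf x‖ := by
  have hp := pdf_pos x
  have hden : (0:ℝ) < (x ^ 2 + 1) ^ 2 := by positivity
  rw [Real.norm_eq_abs, Real.norm_eq_abs, abs_of_pos hp, millsG', abs_div, abs_of_pos hden,
    div_le_iff₀ hden, abs_mul, abs_of_pos hp]
  have habs : |x ^ 4 + 2 * x ^ 2 - 1| ≤ (x ^ 2 + 1) ^ 2 := by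
    rw [abs_le]; constructor <;> nlinarith [sq_nonneg x, sq_nonneg (x^2)]
  nlinarith [abs_nonneg (x ^ 4 + 2 * x ^ 2 - 1)]

lemma millsG'_continuous : Continuous millsG' := by
  unfold millsG'
  exact ((pdf_continuous.mul (by continuity)).div (by continuity) (fun x => by positivity))

lemma millsG'_integrable : Integrable millsG' :=
  pdf_integrable.mono millsG'_continuous.aestronglyMeasurable
    (Filter.Eventually.of_forall millsG'_abs_le)

lemma mills (β : ℝ) : -β * stdNormalPdf β / (β ^ 2 + 1) ≤ stdNormalCdf β := by
  have hft : (∫ x in Set.Iic β, millsG' x) = millsG β - 0 :=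
    integral_Iic_of_hasDerivAt_of_tendsto' (fun x _ => millsG_hasDeriv x)
      millsG'_integrable.integrableOn millsG_tendsto
  have hmono : (∫ x in Set.Iic β, millsG' x) ≤ stdNormalCdf β :=
    setIntegral_mono_on millsG'_integrable.integrableOn pdf_integrable.integrableOn
      measurableSet_Iic (fun x _ => millsG'_le x)
  rw [hft, sub_zero] at hmono
  exact hmono

theorem truncation_reduces_entropy (β : ℝ) :
    Real.log (stdNormalCdf β) - β * stdNormalPdf β / (2 * stdNormalCdf β) < 0 := by
  have hc := cdf_pos β
  have hc1 := cdf_lt_one β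
  have hp := pdf_pos β
  have hlogneg : Real.log (stdNormalCdf β) < 0 := Real.log_neg hc hc1
  rcases le_or_gt 0 β with hβ | hβ
  · have hnn : 0 ≤ β * stdNormalPdf β / (2 * stdNormalCdf β) := by positivity
    linarith
  · have hm := mills β
    have hch := chernoff hβ.le
    have ha : 0 < -β * stdNormalPdf β := mul_pos (neg_pos.mpr hβ) hp
    have hlog : Real.log (stdNormalCdf β) ≤ -β ^ 2 / 2 - Real.log 2 := by
      calc Real.log (stdNormalCdf β) ≤ Real.log (Real.exp (-β ^ 2 / 2) / 2) :=
            Real.log_le_log hc hch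
        _ = -β ^ 2 / 2 - Real.log 2 := by
            rw [Real.log_div (Real.exp_ne_zero _) two_ne_zero, Real.log_exp]
    have hdiv : -β * stdNormalPdf β / (2 * stdNormalCdf β) ≤ (β ^ 2 + 1) / 2 := by
      rw [div_le_iff₀ (by positivity)]
      have h2 := (div_le_iff₀ (by positivity : (0:ℝ) < β ^ 2 + 1)).mp hm
      nlinarith
    have hl2 : (1:ℝ) / 2 < Real.log 2 := by
      have := Real.log_two_gt_d9; linarith
    have heq : β * stdNormalPdf β / (2 * stdNormalCdf β)
        = -(-β * stdNormalPdf β / (2 * stdNormalCdf β)) := by ring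
    rw [heq]
    linarith
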